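/- For a real scale t, one has t < 0 if and only if every nonzero element (a,b) ∈ ℍ_t, (a,b) ≠ (0,0), has a two-sided inverse with respect to ·_t; that is, t < 0 if and only if the unital ring (ℂ², +, ·_t) is a division ring (and this division ring is noncommutative). -/

import Mathlib

/-!
The reduced norm `N_t(a, b) = |a|² - t|b|²` (`hnorm t`) is the determinant of the matrix
realization `π_t`, which is multiplicative, so `N_t` is multiplicative and `N_t(1, 0) = 1`: an
element with a one-sided inverse has nonzero norm. For `t ≥ 0` the element `(√t, 1)` has norm `0`.
For `t < 0` the norm is positive definite, and `h† / N_t(h)` is a two-sided inverse since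
`h ·_t h† = h† ·_t h = (N_t(h), 0)`.
-/

noncomputable section

open ComplexConjugate

/-- The `t`-scaled vector multiplication on `ℂ × ℂ` (the ring `ℍ_t`). -/
def hmul (t : ℝ) (h₁ h₂ : ℂ × ℂ) : ℂ × ℂ :=
  (h₁.1 * h₂.1 + (t : ℂ) * h₁.2 * conj h₂.2, h₁.1 * h₂.2 + h₁.2 * conj h₂.1)

/-- The realization `π_t : ℍ_t → M₂(ℂ)`. -/
def pit (t : ℝ) (h : ℂ × ℂ) : Matrix (Fin 2) (Fin 2) ℂ :=
  !![h.1, (t : ℂ) * h.2; conj h.2, conj h.1]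

/-- The hypercomplex conjugate `(a,b)† = (conj a, -b)`. -/
def hdag (h : ℂ × ℂ) : ℂ × ℂ := (conj h.1, -h.2)

/-- The linear functional `τ((a,b)) = Re a`, composed with `·_t`-multiplication:
the bilinear form `⟨h₁,h₂⟩_t = τ(h₁ ·_t h₂†)`. -/
def hform (t : ℝ) (h₁ h₂ : ℂ × ℂ) : ℝ := (hmul t h₁ (hdag h₂)).1.re

def hnorm (t : ℝ) (h : ℂ × ℂ) : ℝ := Complex.normSq h.1 - t * Complex.normSq h.2

section

variable (t : ℝ)

theorem hmul_hdag (h : ℂ × ℂ) : hmul t h (hdag h) = ((hnorm t h : ℂ), 0) := by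
  simp only [hmul, hdag, hnorm, Complex.conj_conj, map_neg, Prod.mk.injEq]
  push_cast
  rw [← Complex.mul_conj, ← Complex.mul_conj]
  constructor <;> ring

theorem hdag_hmul (h : ℂ × ℂ) : hmul t (hdag h) h = ((hnorm t h : ℂ), 0) := by
  simp only [hmul, hdag, hnorm, Prod.mk.injEq]
  push_cast
  rw [← Complex.mul_conj, ← Complex.mul_conj]
  constructor <;> ring

theorem hmul_real_smul (r : ℝ) (h k : ℂ × ℂ) : hmul t h (r • k) = r • hmul t h k := by
  simp only [hmul, Prod.smul_fst, Prod.smul_snd, Prod.smul_mk, Complex.real_smul, map_mul,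
    Complex.conj_ofReal, Prod.mk.injEq]
  constructor <;> ring

theorem real_smul_hmul (r : ℝ) (h k : ℂ × ℂ) : hmul t (r • h) k = r • hmul t h k := by
  simp only [hmul, Prod.smul_fst, Prod.smul_snd, Prod.smul_mk, Complex.real_smul,
    Prod.mk.injEq]
  constructor <;> ring

theorem exists_hmul_inverse_of_hnorm_ne_zero {h : ℂ × ℂ} (hN : hnorm t h ≠ 0) :
    ∃ k : ℂ × ℂ, hmul t h k = (1, 0) ∧ hmul t k h = (1, 0) := by
  refine ⟨(hnorm t h)⁻¹ • hdag h, ?_, ?_⟩ <;>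
    simp [hmul_real_smul, real_smul_hmul, hmul_hdag, hdag_hmul, Complex.real_smul, hN]

theorem pit_hmul (h k : ℂ × ℂ) : pit t (hmul t h k) = pit t h * pit t k := by
  ext i j
  fin_cases i <;> fin_cases j <;>
    simp [pit, hmul, Matrix.mul_apply, Fin.sum_univ_two] <;> ring

theorem det_pit (h : ℂ × ℂ) : (pit t h).det = hnorm t h := by
  simp only [pit, Matrix.det_fin_two_of, hnorm]
  push_cast
  rw [← Complex.mul_conj, ← Complex.mul_conj]
  ring

theorem hnorm_hmul (h k : ℂ × ℂ) : hnorm t (hmul t h k) = hnorm t h * hnorm t k := by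
  have h_det := det_pit t (hmul t h k)
  rw [pit_hmul, Matrix.det_mul, det_pit, det_pit] at h_det
  exact_mod_cast h_det.symm

theorem hnorm_ne_zero_of_hmul_eq_one {h k : ℂ × ℂ} (hk : hmul t h k = (1, 0)) :
    hnorm t h ≠ 0 := by
  have h1 : hnorm t h * hnorm t k = 1 := by
    rw [← hnorm_hmul, hk]
    simp [hnorm]
  exact left_ne_zero_of_mul_eq_one h1

theorem hmul_zero_one_I_ne : hmul t (0, 1) (Complex.I, 0) ≠ hmul t (Complex.I, 0) (0, 1) := by
  norm_num [hmul, Complex.ext_iff]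

end

theorem hnorm_pos_of_neg {t : ℝ} (ht : t < 0) {h : ℂ × ℂ} (hne : h ≠ (0, 0)) :
    0 < hnorm t h := by
  obtain ⟨a, b⟩ := h
  have ha := Complex.normSq_nonneg a
  have hb := Complex.normSq_nonneg b
  unfold hnorm
  rcases eq_or_ne b 0 with rfl | hb0
  · have ha0 : a ≠ 0 := by rintro rfl; exact hne rfl
    simpa using Complex.normSq_pos.mpr ha0
  · nlinarith [Complex.normSq_pos.mpr hb0]

theorem hnorm_sqrt_one_eq_zero {t : ℝ} (ht : 0 ≤ t) : hnorm t ((Real.sqrt t : ℂ), 1) = 0 := by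
  simp [hnorm, Complex.normSq_ofReal, Real.mul_self_sqrt ht]

/-- `t < 0` iff every nonzero element of `ℍ_t` has a two-sided `·_t`-inverse
(i.e. `ℍ_t` is a division ring), and for `t < 0` the multiplication is noncommutative. -/
theorem scaled_hypercomplex_division_ring_iff (t : ℝ) :
    (t < 0 ↔ ∀ h : ℂ × ℂ, h ≠ ((0 : ℂ), (0 : ℂ)) →
      ∃ k : ℂ × ℂ, hmul t h k = (1, 0) ∧ hmul t k h = (1, 0)) ∧
    (t < 0 → ∃ h₁ h₂ : ℂ × ℂ, hmul t h₁ h₂ ≠ hmul t h₂ h₁) := by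
  refine ⟨⟨fun ht h hne => ?_, fun hinv => ?_⟩, fun _ => ⟨_, _, hmul_zero_one_I_ne t⟩⟩
  · exact exists_hmul_inverse_of_hnorm_ne_zero t (hnorm_pos_of_neg ht hne).ne'
  · by_contra! ht
    obtain ⟨k, hk, -⟩ := hinv ((Real.sqrt t : ℂ), 1) (by simp)
    exact hnorm_ne_zero_of_hmul_eq_one t hk (hnorm_sqrt_one_eq_zero ht)
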